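/- Fluctuation-dissipation relation for alternating-update GAN SDE: suppose μ* is an invariant measure of the SDE with drift b = b₀ + ηb₁ and diffusion σ as above, such that E_{μ*}[𝒜Φ(Θ*,𝒲*)] = 0 for the generator 𝒜. Then E_{μ*}[‖∇_θΦ‖₂² − ‖∇_ωΦ‖₂²] = β^{−1}E_{μ*}[Tr(Σ_θ∇²_θΦ + Σ_ω∇²_ωΦ)] − (η/2)E_{μ*}[∇_θΦ^T∇²_θΦ∇_θΦ + ∇_ωΦ^T∇²_ωΦ∇_ωΦ], where all functions are evaluated at (Θ*,𝒲*) ~ μ*. -/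

import Mathlib

open Real Matrix

/-!
Write `x = ∇_θΦ`, `y = ∇_ωΦ`. Pointwise, `b₀ ⬝ g = -(‖x‖² - ‖y‖²)`, the diffusion term is
`β⁻¹ Tr(Σ_θ ∇²_θΦ + Σ_ω ∇²_ωΦ)`, and `b₁ ⬝ g = -½ (xᵀ∇²_θΦ x + yᵀ∇²_ωΦ y)`: the mixed terms
`∓ xᵀ∇²_{θω}Φ y` cancel because the Hessian of a C² function is symmetric. So `𝒜Φ` equals the
difference of the two sides of the claim, and integrating against `μ*` gives the relation.
-/

theorem ContDiff.fderiv_fderiv_apply_comm {E F : Type*} [NormedAddCommGroup E] [NormedSpace ℝ E]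
    [NormedAddCommGroup F] [NormedSpace ℝ F] {f : E → F} (hf : ContDiff ℝ 2 f) (u v w : E) :
    fderiv ℝ (fun x => fderiv ℝ f x w) u v = fderiv ℝ (fun x => fderiv ℝ f x v) u w := by
  have hd : DifferentiableAt ℝ (fderiv ℝ f) u :=
    (hf.fderiv_right (m := 1) le_rfl).differentiable one_ne_zero u
  rw [fderiv_clm_apply hd (differentiableAt_const _), fderiv_clm_apply hd (differentiableAt_const _)]
  simpa using hf.contDiffAt.isSymmSndFDerivAt (by simp) v w

namespace Matrix

variable {m n R : Type*} [Fintype m] [Fintype n]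

theorem trace_fromBlocks_zero₁₂_zero₂₁_mul [CommRing R] (S : Matrix m m R) (T : Matrix n n R)
    (A : Matrix m m R) (B : Matrix m n R) (C : Matrix n m R) (D : Matrix n n R) :
    (fromBlocks S 0 0 T * fromBlocks A B C D).trace = (S * A).trace + (T * D).trace := by
  simp [fromBlocks_multiply, trace, Fintype.sum_sum_type]

theorem fromBlocks_mulVec_sumElim_neg_dotProduct [CommRing R] (A : Matrix m m R) (C : Matrix n m R)
    (D : Matrix n n R) (x : m → R) (y : n → R) :
    fromBlocks A (-Cᵀ) (-C) (-D) *ᵥ Sum.elim (-x) y ⬝ᵥ Sum.elim x y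
      = -(x ⬝ᵥ A *ᵥ x + y ⬝ᵥ D *ᵥ y) := by
  have hcross : x ⬝ᵥ Cᵀ *ᵥ y = y ⬝ᵥ C *ᵥ x := by
    rw [mulVec_transpose, dotProduct_comm, dotProduct_mulVec]
  rw [fromBlocks_mulVec, sumElim_dotProduct_sumElim, dotProduct_comm _ x, dotProduct_comm _ y]
  simp only [Sum.elim_comp_inl, Sum.elim_comp_inr, mulVec_neg, neg_mulVec, neg_neg,
    dotProduct_add, dotProduct_neg, hcross]
  ring

end Matrix

theorem generator_apply_eq_of_fromBlocks {m n : Type*} [Fintype m] [Fintype n] (η β : ℝ) (x : m → ℝ)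
    (y : n → ℝ) (A : Matrix m m ℝ) (C : Matrix n m ℝ) (D : Matrix n n ℝ) (S : Matrix m m ℝ)
    (T : Matrix n n ℝ) :
    (Sum.elim (-x) y + η • ((1 / 2 : ℝ) • fromBlocks A (-Cᵀ) (-C) (-D) *ᵥ Sum.elim (-x) y))
        ⬝ᵥ Sum.elim x y + 1 / 2 * ((2 / β) • fromBlocks S 0 0 T * fromBlocks A Cᵀ C D).trace
      = 1 / β * ((S * A).trace + (T * D).trace) - η / 2 * (x ⬝ᵥ A *ᵥ x + y ⬝ᵥ D *ᵥ y)
        - (∑ i, x i ^ 2 - ∑ j, y j ^ 2) := by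
  rw [add_dotProduct, smul_dotProduct, smul_dotProduct, fromBlocks_mulVec_sumElim_neg_dotProduct,
    sumElim_dotProduct_sumElim, smul_mul, trace_smul, trace_fromBlocks_zero₁₂_zero₂₁_mul]
  simp only [dotProduct, Pi.neg_apply, neg_mul, Finset.sum_neg_distrib, sq, smul_eq_mul]
  ring

open MeasureTheory in
theorem integral_eq_of_integral_eq_zero {α : Type*} [MeasurableSpace α] {μ : Measure α}
    {F P Q R : α → ℝ} (c d : ℝ) (hP : Integrable P μ) (hQ : Integrable Q μ)
    (hR : Integrable R μ) (hF : ∀ u, F u = c * Q u - d * R u - P u) (hF₀ : ∫ u, F u ∂μ = 0) :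
    ∫ u, P u ∂μ = c * ∫ u, Q u ∂μ - d * ∫ u, R u ∂μ := by
  have hQR : Integrable (fun u => c * Q u - d * R u) μ := (hQ.const_mul c).sub (hR.const_mul d)
  rw [funext hF, integral_sub hQR hP, integral_sub (hQ.const_mul c) (hR.const_mul d),
    integral_const_mul, integral_const_mul] at hF₀
  linarith

theorem stmt_11_general (dθ dω : ℕ) (η β : ℝ)
    (Φ : EuclideanSpace ℝ (Fin dθ ⊕ Fin dω) → ℝ) (hΦ : ContDiff ℝ 2 Φ)
    -- gradient and Hessian of Φ in coordinates:
    (g : EuclideanSpace ℝ (Fin dθ ⊕ Fin dω) → (Fin dθ ⊕ Fin dω) → ℝ)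
    (H : EuclideanSpace ℝ (Fin dθ ⊕ Fin dω) → Matrix (Fin dθ ⊕ Fin dω) (Fin dθ ⊕ Fin dω) ℝ)
    (hH : ∀ u i j, H u i j =
      fderiv ℝ (fun v => fderiv ℝ Φ v (EuclideanSpace.single j 1)) u (EuclideanSpace.single i 1))
    -- Hessian blocks:
    (Hθθ : EuclideanSpace ℝ (Fin dθ ⊕ Fin dω) → Matrix (Fin dθ) (Fin dθ) ℝ)
    (Hθω : EuclideanSpace ℝ (Fin dθ ⊕ Fin dω) → Matrix (Fin dθ) (Fin dω) ℝ)
    (Hωθ : EuclideanSpace ℝ (Fin dθ ⊕ Fin dω) → Matrix (Fin dω) (Fin dθ) ℝ)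
    (Hωω : EuclideanSpace ℝ (Fin dθ ⊕ Fin dω) → Matrix (Fin dω) (Fin dω) ℝ)
    (hHθθ : ∀ u i j, Hθθ u i j = H u (.inl i) (.inl j))
    (hHθω : ∀ u i j, Hθω u i j = H u (.inl i) (.inr j))
    (hHωθ : ∀ u i j, Hωθ u i j = H u (.inr i) (.inl j))
    (hHωω : ∀ u i j, Hωω u i j = H u (.inr i) (.inr j))
    -- diffusion coefficients:
    (Sθ : EuclideanSpace ℝ (Fin dθ ⊕ Fin dω) → Matrix (Fin dθ) (Fin dθ) ℝ)
    (Sω : EuclideanSpace ℝ (Fin dθ ⊕ Fin dω) → Matrix (Fin dω) (Fin dω) ℝ)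
    -- drift:
    (b₀ b₁ b : EuclideanSpace ℝ (Fin dθ ⊕ Fin dω) → (Fin dθ ⊕ Fin dω) → ℝ)
    (hb₀ : ∀ u, b₀ u = Sum.elim (fun i => -(g u (.inl i))) (fun j => g u (.inr j)))
    (hb₁ : ∀ u, b₁ u = (1/2 : ℝ) •
      ((Matrix.fromBlocks (Hθθ u) (-(Hθω u)) (-(Hωθ u)) (-(Hωω u))).mulVec (b₀ u)))
    (hb : ∀ u, b u = b₀ u + η • b₁ u)
    -- σσᵀ = (2/β)·diag(Sθ, Sω) and the generator applied to Φ: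
    (SS : EuclideanSpace ℝ (Fin dθ ⊕ Fin dω) → Matrix (Fin dθ ⊕ Fin dω) (Fin dθ ⊕ Fin dω) ℝ)
    (hSS : ∀ u, SS u = (2 / β) • Matrix.fromBlocks (Sθ u) 0 0 (Sω u))
    (AΦ : EuclideanSpace ℝ (Fin dθ ⊕ Fin dω) → ℝ)
    (hAΦ : ∀ u, AΦ u = (b u) ⬝ᵥ (g u) + (1/2 : ℝ) * ((SS u) * (H u)).trace)
    -- the invariant measure and stationarity:
    (μ : MeasureTheory.Measure (EuclideanSpace ℝ (Fin dθ ⊕ Fin dω)))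
    (hstat : ∫ u, AΦ u ∂μ = 0)
    -- all expectations are assumed finite:
    (hint1 : MeasureTheory.Integrable
      (fun u => (∑ i, (g u (.inl i)) ^ 2) - (∑ j, (g u (.inr j)) ^ 2)) μ)
    (hint2 : MeasureTheory.Integrable
      (fun u => ((Sθ u) * (Hθθ u)).trace + ((Sω u) * (Hωω u)).trace) μ)
    (hint3 : MeasureTheory.Integrable
      (fun u => (fun i => g u (.inl i)) ⬝ᵥ (Hθθ u).mulVec (fun i => g u (.inl i))
        + (fun j => g u (.inr j)) ⬝ᵥ (Hωω u).mulVec (fun j => g u (.inr j))) μ) :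
    ∫ u, ((∑ i, (g u (.inl i)) ^ 2) - (∑ j, (g u (.inr j)) ^ 2)) ∂μ =
      (1 / β) * ∫ u, (((Sθ u) * (Hθθ u)).trace + ((Sω u) * (Hωω u)).trace) ∂μ
      - (η / 2) * ∫ u, ((fun i => g u (.inl i)) ⬝ᵥ (Hθθ u).mulVec (fun i => g u (.inl i))
          + (fun j => g u (.inr j)) ⬝ᵥ (Hωω u).mulVec (fun j => g u (.inr j))) ∂μ := by
  refine integral_eq_of_integral_eq_zero _ _ hint1 hint2 hint3 (fun u => ?_) hstat
  have hθω : Hθω u = (Hωθ u)ᵀ := by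
    ext i j
    rw [hHθω, transpose_apply, hHωθ, hH, hH, hΦ.fderiv_fderiv_apply_comm]
  have hHu : H u = fromBlocks (Hθθ u) (Hωθ u)ᵀ (Hωθ u) (Hωω u) := by
    rw [← hθω]
    ext (i | i) (j | j) <;> simp [hHθθ, hHθω, hHωθ, hHωω]
  have hgu : g u = Sum.elim (fun i => g u (.inl i)) (fun j => g u (.inr j)) := by
    ext (i | j) <;> rfl
  rw [hAΦ, hb, hb₁, hb₀, hSS, hHu, hθω, hgu, ← Pi.neg_def]
  exact generator_apply_eq_of_fromBlocks ..

/-- fluctuation-dissipation relation (FDR1) for the alternating-update GAN SDE. -/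
theorem stmt_11 (dθ dω : ℕ) (η β : ℝ) (hη : 0 < η) (hβ : 0 < β)
    (Φ : EuclideanSpace ℝ (Fin dθ ⊕ Fin dω) → ℝ) (hΦ : ContDiff ℝ 2 Φ)
    -- gradient and Hessian of Φ in coordinates:
    (g : EuclideanSpace ℝ (Fin dθ ⊕ Fin dω) → (Fin dθ ⊕ Fin dω) → ℝ)
    (hg : ∀ u i, g u i = fderiv ℝ Φ u (EuclideanSpace.single i 1))
    (H : EuclideanSpace ℝ (Fin dθ ⊕ Fin dω) → Matrix (Fin dθ ⊕ Fin dω) (Fin dθ ⊕ Fin dω) ℝ)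
    (hH : ∀ u i j, H u i j =
      fderiv ℝ (fun v => fderiv ℝ Φ v (EuclideanSpace.single j 1)) u (EuclideanSpace.single i 1))
    -- Hessian blocks:
    (Hθθ : EuclideanSpace ℝ (Fin dθ ⊕ Fin dω) → Matrix (Fin dθ) (Fin dθ) ℝ)
    (Hθω : EuclideanSpace ℝ (Fin dθ ⊕ Fin dω) → Matrix (Fin dθ) (Fin dω) ℝ)
    (Hωθ : EuclideanSpace ℝ (Fin dθ ⊕ Fin dω) → Matrix (Fin dω) (Fin dθ) ℝ)
    (Hωω : EuclideanSpace ℝ (Fin dθ ⊕ Fin dω) → Matrix (Fin dω) (Fin dω) ℝ)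
    (hHθθ : ∀ u i j, Hθθ u i j = H u (.inl i) (.inl j))
    (hHθω : ∀ u i j, Hθω u i j = H u (.inl i) (.inr j))
    (hHωθ : ∀ u i j, Hωθ u i j = H u (.inr i) (.inl j))
    (hHωω : ∀ u i j, Hωω u i j = H u (.inr i) (.inr j))
    -- diffusion coefficients:
    (Sθ : EuclideanSpace ℝ (Fin dθ ⊕ Fin dω) → Matrix (Fin dθ) (Fin dθ) ℝ)
    (Sω : EuclideanSpace ℝ (Fin dθ ⊕ Fin dω) → Matrix (Fin dω) (Fin dω) ℝ)
    (hSθ : ∀ u, (Sθ u).IsSymm ∧ (Sθ u).PosSemidef)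
    (hSω : ∀ u, (Sω u).IsSymm ∧ (Sω u).PosSemidef)
    -- drift:
    (b₀ b₁ b : EuclideanSpace ℝ (Fin dθ ⊕ Fin dω) → (Fin dθ ⊕ Fin dω) → ℝ)
    (hb₀ : ∀ u, b₀ u = Sum.elim (fun i => -(g u (.inl i))) (fun j => g u (.inr j)))
    (hb₁ : ∀ u, b₁ u = (1/2 : ℝ) •
      ((Matrix.fromBlocks (Hθθ u) (-(Hθω u)) (-(Hωθ u)) (-(Hωω u))).mulVec (b₀ u)))
    (hb : ∀ u, b u = b₀ u + η • b₁ u)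
    -- σσᵀ = (2/β)·diag(Sθ, Sω) and the generator applied to Φ:
    (SS : EuclideanSpace ℝ (Fin dθ ⊕ Fin dω) → Matrix (Fin dθ ⊕ Fin dω) (Fin dθ ⊕ Fin dω) ℝ)
    (hSS : ∀ u, SS u = (2 / β) • Matrix.fromBlocks (Sθ u) 0 0 (Sω u))
    (AΦ : EuclideanSpace ℝ (Fin dθ ⊕ Fin dω) → ℝ)
    (hAΦ : ∀ u, AΦ u = (b u) ⬝ᵥ (g u) + (1/2 : ℝ) * ((SS u) * (H u)).trace)
    -- the invariant measure and stationarity: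
    (μ : MeasureTheory.Measure (EuclideanSpace ℝ (Fin dθ ⊕ Fin dω)))
    [MeasureTheory.IsProbabilityMeasure μ]
    (hstat : ∫ u, AΦ u ∂μ = 0)
    -- all expectations are assumed finite:
    (hint1 : MeasureTheory.Integrable
      (fun u => (∑ i, (g u (.inl i)) ^ 2) - (∑ j, (g u (.inr j)) ^ 2)) μ)
    (hint2 : MeasureTheory.Integrable
      (fun u => ((Sθ u) * (Hθθ u)).trace + ((Sω u) * (Hωω u)).trace) μ)
    (hint3 : MeasureTheory.Integrable
      (fun u => (fun i => g u (.inl i)) ⬝ᵥ (Hθθ u).mulVec (fun i => g u (.inl i))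
        + (fun j => g u (.inr j)) ⬝ᵥ (Hωω u).mulVec (fun j => g u (.inr j))) μ) :
    ∫ u, ((∑ i, (g u (.inl i)) ^ 2) - (∑ j, (g u (.inr j)) ^ 2)) ∂μ =
      (1 / β) * ∫ u, (((Sθ u) * (Hθθ u)).trace + ((Sω u) * (Hωω u)).trace) ∂μ
      - (η / 2) * ∫ u, ((fun i => g u (.inl i)) ⬝ᵥ (Hθθ u).mulVec (fun i => g u (.inl i))
          + (fun j => g u (.inr j)) ⬝ᵥ (Hωω u).mulVec (fun j => g u (.inr j))) ∂μ :=
  stmt_11_general dθ dω η β Φ hΦ g H hH Hθθ Hθω Hωθ Hωω hHθθ hHθω hHωθ hHωω Sθ Sω b₀ b₁ b hb₀ hb₁ hb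
    SS hSS AΦ hAΦ μ hstat hint1 hint2 hint3
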